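/- arXiv:2405.08796 — 4 statements merged into one kernel-verified Lean document; each statement's English description precedes it below -/
import Mathlib

section
/- Variational characterization of Bayes: let p ∈ Δ(S) have full support and f : S → ℝ be a positive likelihood function (f(s) = likelihood of the observed data at state s). Then the unique minimizer over q ∈ Δ(S) of D(q‖p) − ∑_s q(s) log f(s) is the Bayesian posterior q*(s) = p(s)f(s) / ∑_{s'} p(s')f(s'). -/
/-!
With `Z = ∑ s, p s * f s`, the objective `D(q‖p) − ∑ s, q s * log (f s)` equals
`D(q‖q*) − log Z` for every probability vector `q`. So everything reduces to Gibbs' inequality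
`D(q‖r) ≥ 0`, with equality only at `q = r`; it holds termwise once `D(q‖r)` is rewritten,
using `∑ q = ∑ r`, as `∑ s, r s * klFun (q s / r s)` with `klFun x = x log x + 1 − x ≥ 0`,
which vanishes only at `x = 1`.
-/

open Real Finset InformationTheory

section

variable {S : Type*} [Fintype S]

lemma mul_klFun_div {a b : ℝ} (hb : b ≠ 0) :
    b * klFun (a / b) = a * log (a / b) + b - a := by
  rw [klFun_apply]
  field_simp

lemma sum_mul_log_div_eq_sum_mul_klFun {q r : S → ℝ} (hr : ∀ s, r s ≠ 0)
    (hsum : ∑ s, q s = ∑ s, r s) :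
    ∑ s, q s * log (q s / r s) = ∑ s, r s * klFun (q s / r s) := by
  simp only [mul_klFun_div (hr _), sum_sub_distrib, sum_add_distrib, hsum, add_sub_cancel_right]

lemma sum_mul_log_div_nonneg {q r : S → ℝ} (hq : ∀ s, 0 ≤ q s) (hr : ∀ s, 0 < r s)
    (hsum : ∑ s, q s = ∑ s, r s) :
    0 ≤ ∑ s, q s * log (q s / r s) := by
  rw [sum_mul_log_div_eq_sum_mul_klFun (fun s => (hr s).ne') hsum]
  exact sum_nonneg fun s _ => mul_nonneg (hr s).le (klFun_nonneg (div_nonneg (hq s) (hr s).le))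

lemma eq_of_sum_mul_log_div_eq_zero {q r : S → ℝ} (hq : ∀ s, 0 ≤ q s) (hr : ∀ s, 0 < r s)
    (hsum : ∑ s, q s = ∑ s, r s) (hzero : ∑ s, q s * log (q s / r s) = 0) :
    q = r := by
  rw [sum_mul_log_div_eq_sum_mul_klFun (fun s => (hr s).ne') hsum,
    sum_eq_zero_iff_of_nonneg fun s _ =>
      mul_nonneg (hr s).le (klFun_nonneg (div_nonneg (hq s) (hr s).le))] at hzero
  funext s
  have hkl : klFun (q s / r s) = 0 :=
    (mul_eq_zero.mp (hzero s (mem_univ s))).resolve_left (hr s).ne'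
  rw [klFun_eq_zero_iff (div_nonneg (hq s) (hr s).le), div_eq_one_iff_eq (hr s).ne'] at hkl
  exact hkl

lemma sum_mul_log_div_self (q : S → ℝ) : ∑ s, q s * log (q s / q s) = 0 :=
  sum_eq_zero fun s _ => by
    rcases eq_or_ne (q s) 0 with h | h <;> simp [h]

noncomputable def bayesPosterior (p f : S → ℝ) (s : S) : ℝ :=
  p s * f s / ∑ s', p s' * f s'

lemma bayesPosterior_pos {p f : S → ℝ} (hp : ∀ s, 0 < p s) (hf : ∀ s, 0 < f s) (s : S) :
    0 < bayesPosterior p f s :=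
  div_pos (mul_pos (hp s) (hf s))
    (sum_pos (fun s' _ => mul_pos (hp s') (hf s')) ⟨s, mem_univ s⟩)

lemma sum_bayesPosterior {p f : S → ℝ} (hZ : ∑ s, p s * f s ≠ 0) :
    ∑ s, bayesPosterior p f s = 1 := by
  simp only [bayesPosterior, ← sum_div, div_self hZ]

lemma mul_log_div_bayesPosterior {p f : S → ℝ} (hp : ∀ s, p s ≠ 0) (hf : ∀ s, f s ≠ 0)
    (hZ : ∑ s, p s * f s ≠ 0) (x : ℝ) (s : S) :
    x * log (x / bayesPosterior p f s) =
      x * log (x / p s) - x * log (f s) + x * log (∑ s', p s' * f s') := by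
  rcases eq_or_ne x 0 with rfl | hx
  · simp
  · rw [bayesPosterior, log_div hx (div_ne_zero (mul_ne_zero (hp s) (hf s)) hZ),
      log_div (mul_ne_zero (hp s) (hf s)) hZ, log_mul (hp s) (hf s), log_div hx (hp s)]
    ring

lemma objective_eq_sum_mul_log_div_bayesPosterior_sub_log {p f q : S → ℝ}
    (hp : ∀ s, p s ≠ 0) (hf : ∀ s, f s ≠ 0) (hZ : ∑ s, p s * f s ≠ 0) (hq : ∑ s, q s = 1) :
    (∑ s, q s * log (q s / p s)) - ∑ s, q s * log (f s) =
      (∑ s, q s * log (q s / bayesPosterior p f s)) - log (∑ s, p s * f s) := by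
  simp only [mul_log_div_bayesPosterior hp hf hZ, sum_add_distrib, sum_sub_distrib, ← sum_mul,
    hq, one_mul, add_sub_cancel_right]

end

theorem bayes_variational_general {S : Type*} [Fintype S]
    (p : S → ℝ) (hp0 : ∀ s, 0 < p s) (hp1 : ∑ s, p s = 1)
    (f : S → ℝ) (hf : ∀ s, 0 < f s)
    (qstar : S → ℝ) (hqstar : ∀ s, qstar s = p s * f s / ∑ s', p s' * f s') :
    ((∀ s, 0 ≤ qstar s) ∧ ∑ s, qstar s = 1) ∧
    (∀ q : S → ℝ, (∀ s, 0 ≤ q s) → ∑ s, q s = 1 →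
      (∑ s, qstar s * log (qstar s / p s)) - (∑ s, qstar s * log (f s)) ≤
        (∑ s, q s * log (q s / p s)) - (∑ s, q s * log (f s))) ∧
    (∀ q : S → ℝ, (∀ s, 0 ≤ q s) → ∑ s, q s = 1 →
      (∑ s, q s * log (q s / p s)) - (∑ s, q s * log (f s)) =
        (∑ s, qstar s * log (qstar s / p s)) - (∑ s, qstar s * log (f s)) →
      q = qstar) := by
  obtain rfl : qstar = bayesPosterior p f := funext hqstar
  have hZ : 0 < ∑ s, p s * f s :=
    sum_pos (fun s _ => mul_pos (hp0 s) (hf s)) (nonempty_of_sum_ne_zero (hp1 ▸ one_ne_zero))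
  have hpost := bayesPosterior_pos hp0 hf
  have hpost1 := sum_bayesPosterior hZ.ne'
  have hobj (q : S → ℝ) (hq1 : ∑ s, q s = 1) :=
    objective_eq_sum_mul_log_div_bayesPosterior_sub_log (fun s => (hp0 s).ne')
      (fun s => (hf s).ne') hZ.ne' hq1
  have hmin := hobj _ hpost1
  rw [sum_mul_log_div_self, zero_sub] at hmin
  refine ⟨⟨fun s => (hpost s).le, hpost1⟩, fun q hq hq1 => ?_, fun q hq hq1 heq => ?_⟩
  · rw [hmin, hobj q hq1]
    linarith [sum_mul_log_div_nonneg hq hpost (hq1.trans hpost1.symm)]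
  · refine eq_of_sum_mul_log_div_eq_zero hq hpost (hq1.trans hpost1.symm) ?_
    rw [hobj q hq1, hmin] at heq
    linarith

/-- Variational characterization of Bayes: the unique minimizer over
`q ∈ Δ(S)` of `D(q‖p) − ∑ s, q s * log (f s)` is the Bayesian posterior
`q*(s) = p s * f s / ∑ s', p s' * f s'`. -/
theorem bayes_variational {S : Type*} [Fintype S] [Nonempty S]
    (p : S → ℝ) (hp0 : ∀ s, 0 < p s) (hp1 : ∑ s, p s = 1)
    (f : S → ℝ) (hf : ∀ s, 0 < f s)
    (qstar : S → ℝ) (hqstar : ∀ s, qstar s = p s * f s / ∑ s', p s' * f s') :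
    ((∀ s, 0 ≤ qstar s) ∧ ∑ s, qstar s = 1) ∧
    (∀ q : S → ℝ, (∀ s, 0 ≤ q s) → ∑ s, q s = 1 →
      (∑ s, qstar s * log (qstar s / p s)) - (∑ s, qstar s * log (f s)) ≤
        (∑ s, q s * log (q s / p s)) - (∑ s, q s * log (f s))) ∧
    (∀ q : S → ℝ, (∀ s, 0 ≤ q s) → ∑ s, q s = 1 →
      (∑ s, q s * log (q s / p s)) - (∑ s, q s * log (f s)) =
        (∑ s, qstar s * log (qstar s / p s)) - (∑ s, qstar s * log (f s)) →
      q = qstar) :=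
  bayes_variational_general p hp0 hp1 f hf qstar hqstar
end

section
/- Supercritical case is degenerate: let p ∈ Δ(S) have full support, f : S → ℝ be positive, λ > 0, and μ ≥ 1. Then any Dirac measure δ_{s*} with s* maximizing p(s)·f(s)^λ over S attains the minimum over q ∈ Δ(S) of D(q‖p) − λ·∑_s q(s) log f(s) + μ·H(q). -/
open Real Finset

/-- Supercritical case `μ ≥ 1` is degenerate: the Dirac measure on any
maximizer `s*` of `p s * f s ^ λ` attains the minimum of
`D(q‖p) − λ E_q[log f] + μ H(q)` over `q ∈ Δ(S)`. -/
theorem exponential_updating_supercritical {S : Type*} [Fintype S] [Nonempty S]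
    [DecidableEq S]
    (p : S → ℝ) (hp0 : ∀ s, 0 < p s) (hp1 : ∑ s, p s = 1)
    (f : S → ℝ) (hf : ∀ s, 0 < f s)
    (lam mu : ℝ) (hlam : 0 < lam) (hmu : 1 ≤ mu)
    (sstar : S) (hsstar : ∀ s, p s * f s ^ lam ≤ p sstar * f sstar ^ lam)
    (delta : S → ℝ) (hdelta : ∀ s, delta s = if s = sstar then 1 else 0) :
    ∀ q : S → ℝ, (∀ s, 0 ≤ q s) → ∑ s, q s = 1 →
      (∑ s, delta s * log (delta s / p s)) - lam * (∑ s, delta s * log (f s)) +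
          mu * (-(∑ s, delta s * log (delta s))) ≤
        (∑ s, q s * log (q s / p s)) - lam * (∑ s, q s * log (f s)) +
          mu * (-(∑ s, q s * log (q s))) := by
  intro q hq hq1
  have hd1 : ∑ s, delta s * log (delta s / p s) = -log (p sstar) := by
    simp [hdelta, ite_mul, Finset.sum_ite_eq', Real.log_div one_ne_zero (hp0 sstar).ne']
  have hd2 : ∑ s, delta s * log (f s) = log (f sstar) := by
    simp [hdelta, ite_mul, Finset.sum_ite_eq']
  have hd3 : ∑ s, delta s * log (delta s) = 0 := by
    simp [hdelta, ite_mul, Finset.sum_ite_eq']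
  rw [hd1, hd2, hd3]
  have hqle1 : ∀ s, q s ≤ 1 := by
    intro s
    rw [← hq1]
    exact Finset.single_le_sum (fun t _ => hq t) (Finset.mem_univ s)
  have hA : ∑ s, q s * log (q s) ≤ 0 := by
    apply Finset.sum_nonpos
    intro s _
    exact mul_nonpos_iff.2 (Or.inl ⟨hq s, Real.log_nonpos (hq s) (hqle1 s)⟩)
  have hsplit : ∑ s, q s * log (q s / p s)
      = ∑ s, q s * log (q s) - ∑ s, q s * log (p s) := by
    rw [← Finset.sum_sub_distrib]
    apply Finset.sum_congr rfl
    intro s _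
    by_cases h : q s = 0
    · simp [h]
    · rw [Real.log_div h (hp0 s).ne']; ring
  have key : ∀ s, log (p s) + lam * log (f s) ≤ log (p sstar) + lam * log (f sstar) := by
    intro s
    have h1 : log (p s * f s ^ lam) ≤ log (p sstar * f sstar ^ lam) :=
      Real.log_le_log (mul_pos (hp0 s) (Real.rpow_pos_of_pos (hf s) lam)) (hsstar s)
    rwa [Real.log_mul (hp0 s).ne' (Real.rpow_pos_of_pos (hf s) lam).ne',
      Real.log_mul (hp0 sstar).ne' (Real.rpow_pos_of_pos (hf sstar) lam).ne',
      Real.log_rpow (hf s), Real.log_rpow (hf sstar)] at h1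
  have hsum : ∑ s, q s * log (p s) + lam * ∑ s, q s * log (f s)
      ≤ log (p sstar) + lam * log (f sstar) := by
    have h2 : ∑ s, q s * (log (p s) + lam * log (f s))
        ≤ ∑ s, q s * (log (p sstar) + lam * log (f sstar)) :=
      Finset.sum_le_sum fun s _ => mul_le_mul_of_nonneg_left (key s) (hq s)
    rw [← Finset.sum_mul, hq1, one_mul] at h2
    calc ∑ s, q s * log (p s) + lam * ∑ s, q s * log (f s)
        = ∑ s, q s * (log (p s) + lam * log (f s)) := by
          rw [Finset.mul_sum, ← Finset.sum_add_distrib]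
          exact Finset.sum_congr rfl fun s _ => by ring
      _ ≤ _ := h2
  have hprod : 0 ≤ (mu - 1) * (-(∑ s, q s * log (q s))) :=
    mul_nonneg (by linarith) (by linarith)
  rw [hsplit]
  nlinarith [hprod, hsum]
end

section
/- For μ ≥ 1, λ > 0, p ∈ Δ(S) with full support and f positive, the value of the objective D(q‖p) − λ·E_q[log f] + μ·H(q) at the Dirac measure on any maximizer s* of p(s)f(s)^λ equals −max_{s} log(p(s)·f(s)^λ), and this is a lower bound for the objective over all q ∈ Δ(S). -/
open Real Finset

/-- For `μ ≥ 1`, the objective at the Dirac on a maximizer `s*` of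
`p s * f s ^ λ` equals `−max_s log (p s * f s ^ λ)`, and this value is a lower bound
for the objective over all `q ∈ Δ(S)`. -/
theorem dirac_value_and_lower_bound {S : Type*} [Fintype S] [Nonempty S]
    [DecidableEq S]
    (p : S → ℝ) (hp0 : ∀ s, 0 < p s) (hp1 : ∑ s, p s = 1)
    (f : S → ℝ) (hf : ∀ s, 0 < f s)
    (lam mu : ℝ) (hlam : 0 < lam) (hmu : 1 ≤ mu)
    (sstar : S) (hsstar : ∀ s, p s * f s ^ lam ≤ p sstar * f sstar ^ lam)
    (delta : S → ℝ) (hdelta : ∀ s, delta s = if s = sstar then 1 else 0) :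
    ((∑ s, delta s * log (delta s / p s)) - lam * (∑ s, delta s * log (f s)) +
        mu * (-(∑ s, delta s * log (delta s))) =
      -(univ.sup' univ_nonempty fun s => log (p s * f s ^ lam))) ∧
    (∀ q : S → ℝ, (∀ s, 0 ≤ q s) → ∑ s, q s = 1 →
      -(univ.sup' univ_nonempty fun s => log (p s * f s ^ lam)) ≤
        (∑ s, q s * log (q s / p s)) - lam * (∑ s, q s * log (f s)) +
          mu * (-(∑ s, q s * log (q s)))) := by
  have hfp : ∀ s, (0:ℝ) < f s ^ lam := fun s => rpow_pos_of_pos (hf s) lam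
  have hM : (univ.sup' univ_nonempty fun s => log (p s * f s ^ lam))
      = log (p sstar * f sstar ^ lam) := by
    refine le_antisymm (Finset.sup'_le _ _ fun s _ => ?_) (Finset.le_sup' (fun s => log (p s * f s ^ lam)) (mem_univ sstar))
    exact Real.log_le_log (mul_pos (hp0 s) (hfp s)) (hsstar s)
  constructor
  · have h1 : (∑ s, delta s * log (delta s / p s)) = -log (p sstar) := by
      rw [Finset.sum_eq_single sstar]
      · rw [hdelta sstar]; simp [Real.log_div one_ne_zero (hp0 sstar).ne']
      · intro s _ hs; rw [hdelta s]; simp [hs]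
      · simp
    have h2 : (∑ s, delta s * log (f s)) = log (f sstar) := by
      rw [Finset.sum_eq_single sstar]
      · rw [hdelta sstar]; simp
      · intro s _ hs; rw [hdelta s]; simp [hs]
      · simp
    have h3 : (∑ s, delta s * log (delta s)) = 0 := by
      rw [Finset.sum_eq_single sstar]
      · rw [hdelta sstar]; simp
      · intro s _ hs; rw [hdelta s]; simp [hs]
      · simp
    rw [h1, h2, h3, hM, Real.log_mul (hp0 sstar).ne' (hfp sstar).ne',
      Real.log_rpow (hf sstar)]
    ring
  · intro q hq hq1
    set M := (univ.sup' univ_nonempty fun s => log (p s * f s ^ lam)) with hMdef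
    have hq1' : ∀ s, q s ≤ 1 := by
      intro s
      calc q s ≤ ∑ t, q t := Finset.single_le_sum (fun t _ => hq t) (mem_univ s)
        _ = 1 := hq1
    have hdiv : (∑ s, q s * log (q s / p s))
        = (∑ s, q s * log (q s)) - ∑ s, q s * log (p s) := by
      rw [← Finset.sum_sub_distrib]
      refine Finset.sum_congr rfl fun s _ => ?_
      rcases eq_or_lt_of_le (hq s) with h | h
      · simp [← h]
      · rw [Real.log_div h.ne' (hp0 s).ne']; ring
    have ha : (∑ s, q s * log (q s)) ≤ 0 := by
      refine Finset.sum_nonpos fun s _ => ?_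
      have := mul_le_mul_of_nonneg_left (Real.log_nonpos (hq s) (hq1' s)) (hq s)
      simpa using this
    have hB : (∑ s, q s * log (p s)) + lam * (∑ s, q s * log (f s)) ≤ M := by
      have hle : (∑ s, q s * log (p s * f s ^ lam)) ≤ ∑ s, q s * M := by
        refine Finset.sum_le_sum fun s _ => ?_
        exact mul_le_mul_of_nonneg_left (Finset.le_sup' (fun s => log (p s * f s ^ lam)) (mem_univ s) : _ ≤ M) (hq s)
      have hr : (∑ s, q s * M) = M := by rw [← Finset.sum_mul, hq1, one_mul]
      have hl : (∑ s, q s * log (p s * f s ^ lam))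
          = (∑ s, q s * log (p s)) + lam * (∑ s, q s * log (f s)) := by
        rw [Finset.mul_sum, ← Finset.sum_add_distrib]
        refine Finset.sum_congr rfl fun s _ => ?_
        rw [Real.log_mul (hp0 s).ne' (hfp s).ne', Real.log_rpow (hf s)]; ring
      rw [hl] at hle
      rw [hr] at hle
      exact hle
    have hmua : mu * (∑ s, q s * log (q s)) ≤ 1 * (∑ s, q s * log (q s)) :=
      mul_le_mul_of_nonpos_right hmu ha
    rw [hdiv]
    linarith
end

section
/- Any exponential updating rule with parameters α > 0 and β > 0 arises as the solution to the variational problem: setting λ = β/α and μ = 1 − 1/α (noting μ < 1), the unique minimizer of D(q‖p) − λ·∑_s q(s) log f(s) + μ·H(q) over q ∈ Δ(S) is q*(s) ∝ p(s)^α · f(s)^β. -/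
open Real Finset

/-- Pointwise Gibbs bound: for `0 ≤ a` and `0 < b`, `a - b ≤ a * log (a / b)`. -/
lemma gibbs_term_le {a b : ℝ} (ha : 0 ≤ a) (hb : 0 < b) :
    a - b ≤ a * log (a / b) := by
  rcases eq_or_lt_of_le ha with h | h
  · simp [← h]; linarith
  · have hba : 0 < b / a := div_pos hb h
    have := Real.log_le_sub_one_of_pos hba
    have hlog : log (a / b) = - log (b / a) := by
      rw [← Real.log_inv]; congr 1; field_simp
    rw [hlog]
    have h2 : a * log (b / a) ≤ a * (b / a - 1) := mul_le_mul_of_nonneg_left this h.le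
    have h3 : a * (b / a - 1) = b - a := by field_simp
    linarith

/-- Strict pointwise Gibbs bound when `a ≠ b`. -/
lemma gibbs_term_lt {a b : ℝ} (ha : 0 ≤ a) (hb : 0 < b) (hab : a ≠ b) :
    a - b < a * log (a / b) := by
  rcases eq_or_lt_of_le ha with h | h
  · simp [← h]; linarith
  · have hba : 0 < b / a := div_pos hb h
    have hne : b / a ≠ 1 := by
      intro hh
      exact hab ((div_eq_one_iff_eq h.ne').mp hh).symm
    have := Real.log_lt_sub_one_of_pos hba hne
    have hlog : log (a / b) = - log (b / a) := by
      rw [← Real.log_inv]; congr 1; field_simp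
    rw [hlog]
    have h2 : a * log (b / a) < a * (b / a - 1) := by
      exact (mul_lt_mul_iff_right₀ h).mpr this
    have h3 : a * (b / a - 1) = b - a := by field_simp
    linarith

/-- Any exponential updating rule with parameters `α, β > 0` arises as
the solution to the variational problem with `λ = β/α` and `μ = 1 − 1/α`: the unique
minimizer of `D(q‖p) − λ E_q[log f] + μ H(q)` is `q*(s) ∝ p s ^ α * f s ^ β`. -/
theorem exponential_rule_from_variational {S : Type*} [Fintype S] [Nonempty S]
    (p : S → ℝ) (hp0 : ∀ s, 0 < p s) (hp1 : ∑ s, p s = 1)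
    (f : S → ℝ) (hf : ∀ s, 0 < f s)
    (α β : ℝ) (hα : 0 < α) (hβ : 0 < β)
    (lam mu : ℝ) (hlam : lam = β / α) (hmu : mu = 1 - 1 / α)
    (qstar : S → ℝ)
    (hqstar : ∀ s, qstar s = p s ^ α * f s ^ β / ∑ s', p s' ^ α * f s' ^ β) :
    mu < 1 ∧
    ((∀ s, 0 ≤ qstar s) ∧ ∑ s, qstar s = 1) ∧
    (∀ q : S → ℝ, (∀ s, 0 ≤ q s) → ∑ s, q s = 1 →
      (∑ s, qstar s * log (qstar s / p s)) - lam * (∑ s, qstar s * log (f s)) +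
          mu * (-(∑ s, qstar s * log (qstar s))) ≤
        (∑ s, q s * log (q s / p s)) - lam * (∑ s, q s * log (f s)) +
          mu * (-(∑ s, q s * log (q s)))) ∧
    (∀ q : S → ℝ, (∀ s, 0 ≤ q s) → ∑ s, q s = 1 →
      (∑ s, q s * log (q s / p s)) - lam * (∑ s, q s * log (f s)) +
          mu * (-(∑ s, q s * log (q s))) =
        (∑ s, qstar s * log (qstar s / p s)) - lam * (∑ s, qstar s * log (f s)) +
          mu * (-(∑ s, qstar s * log (qstar s))) →
      q = qstar) := by
  set Z : ℝ := ∑ s', p s' ^ α * f s' ^ β with hZdef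
  have hw : ∀ s, 0 < p s ^ α * f s ^ β := fun s =>
    mul_pos (Real.rpow_pos_of_pos (hp0 s) α) (Real.rpow_pos_of_pos (hf s) β)
  have hZ : 0 < Z := Finset.sum_pos (fun s _ => hw s) univ_nonempty
  have hqs_pos : ∀ s, 0 < qstar s := fun s => by
    rw [hqstar s]; exact div_pos (hw s) hZ
  have hqs_sum : ∑ s, qstar s = 1 := by
    simp only [hqstar, ← Finset.sum_div]
    exact div_self hZ.ne'
  -- log of qstar
  have hlogq : ∀ s, log (qstar s) = α * log (p s) + β * log (f s) - log Z := by
    intro s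
    rw [hqstar s, Real.log_div (hw s).ne' hZ.ne', Real.log_mul
      (Real.rpow_pos_of_pos (hp0 s) α).ne' (Real.rpow_pos_of_pos (hf s) β).ne',
      Real.log_rpow (hp0 s), Real.log_rpow (hf s)]
  -- objective rewrite
  have hF : ∀ q : S → ℝ, (∀ s, 0 ≤ q s) → ∑ s, q s = 1 →
      (∑ s, q s * log (q s / p s)) - lam * (∑ s, q s * log (f s)) +
        mu * (-(∑ s, q s * log (q s))) =
      (1/α) * (∑ s, q s * log (q s / qstar s)) - (1/α) * log Z := by
    intro q hq0 hq1
    have key : ∀ s, q s * log (q s / p s) - lam * (q s * log (f s)) -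
        mu * (q s * log (q s)) =
        (1/α) * (q s * log (q s / qstar s)) - (1/α) * (q s * log Z) := by
      intro s
      rcases eq_or_lt_of_le (hq0 s) with h | h
      · simp [← h]
      · rw [Real.log_div h.ne' (hp0 s).ne', Real.log_div h.ne' (hqs_pos s).ne',
          hlogq s, hlam, hmu]
        field_simp
        ring
    have hsum : ∑ s, (1/α) * (q s * log Z) = (1/α) * log Z := by
      rw [← Finset.mul_sum, ← Finset.sum_mul, hq1, one_mul]
    calc (∑ s, q s * log (q s / p s)) - lam * (∑ s, q s * log (f s)) +
          mu * (-(∑ s, q s * log (q s)))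
        = ∑ s, (q s * log (q s / p s) - lam * (q s * log (f s)) -
            mu * (q s * log (q s))) := by
          rw [Finset.sum_sub_distrib, Finset.sum_sub_distrib, ← Finset.mul_sum,
            ← Finset.mul_sum]; ring
      _ = ∑ s, ((1/α) * (q s * log (q s / qstar s)) - (1/α) * (q s * log Z)) := by
          exact Finset.sum_congr rfl fun s _ => key s
      _ = (1/α) * (∑ s, q s * log (q s / qstar s)) - (1/α) * log Z := by
          rw [Finset.sum_sub_distrib, hsum, ← Finset.mul_sum]
  -- Gibbs: nonnegativity of relative entropy w.r.t. qstar
  have gibbs_le : ∀ q : S → ℝ, (∀ s, 0 ≤ q s) → ∑ s, q s = 1 →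
      0 ≤ ∑ s, q s * log (q s / qstar s) := by
    intro q hq0 hq1
    have : ∑ s, (q s - qstar s) ≤ ∑ s, q s * log (q s / qstar s) :=
      Finset.sum_le_sum fun s _ => gibbs_term_le (hq0 s) (hqs_pos s)
    rwa [Finset.sum_sub_distrib, hq1, hqs_sum, sub_self] at this
  have gibbs_lt : ∀ q : S → ℝ, (∀ s, 0 ≤ q s) → ∑ s, q s = 1 → q ≠ qstar →
      0 < ∑ s, q s * log (q s / qstar s) := by
    intro q hq0 hq1 hne
    obtain ⟨s₀, hs₀⟩ := Function.ne_iff.mp hne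
    have : ∑ s, (q s - qstar s) < ∑ s, q s * log (q s / qstar s) := by
      apply Finset.sum_lt_sum (fun s _ => gibbs_term_le (hq0 s) (hqs_pos s))
      exact ⟨s₀, Finset.mem_univ s₀, gibbs_term_lt (hq0 s₀) (hqs_pos s₀) hs₀⟩
    rwa [Finset.sum_sub_distrib, hq1, hqs_sum, sub_self] at this
  have hselfzero : ∑ s, qstar s * log (qstar s / qstar s) = 0 := by
    apply Finset.sum_eq_zero; intro s _
    rw [div_self (hqs_pos s).ne', Real.log_one, mul_zero]
  refine ⟨?_, ⟨fun s => (hqs_pos s).le, hqs_sum⟩, ?_, ?_⟩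
  · rw [hmu]; have : 0 < 1 / α := by positivity
    linarith
  · intro q hq0 hq1
    rw [hF q hq0 hq1, hF qstar (fun s => (hqs_pos s).le) hqs_sum, hselfzero]
    have h1 := gibbs_le q hq0 hq1
    have hα' : 0 < 1/α := by positivity
    nlinarith
  · intro q hq0 hq1 heq
    by_contra hne
    rw [hF q hq0 hq1, hF qstar (fun s => (hqs_pos s).le) hqs_sum, hselfzero] at heq
    have h1 := gibbs_lt q hq0 hq1 hne
    have hα' : 0 < 1/α := by positivity
    nlinarith
end
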